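/- Let G be a group with finite symmetric generating set X such that the set of geodesics over X is k-locally excluding for some k > 0. Then the word problem of G over X is accepted by a (deterministic) pushdown automaton; in particular the word problem of G is a context-free language. -/

import Mathlib

/-- The minimal length of a word over `X` representing `g` (the geodesic length `l_G`). -/
noncomputable def lG {G : Type*} [Group G] (X : Set G) (g : G) : ℕ :=
  sInf {n | ∃ w : List G, (∀ x ∈ w, x ∈ X) ∧ w.prod = g ∧ w.length = n}

/-- `w` is a geodesic word over `X`. -/
def Geodesic {G : Type*} [Group G] (X : Set G) (w : List G) : Prop :=
  (∀ x ∈ w, x ∈ X) ∧ w.length = lG X w.prod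

/-- `w` is a `k`-local geodesic over `X`: every subword (contiguous factor) of length
at most `k` is geodesic. -/
def LocalGeodesic {G : Type*} [Group G] (X : Set G) (k : ℕ) (w : List G) : Prop :=
  (∀ x ∈ w, x ∈ X) ∧ ∀ u : List G, u <:+: w → u.length ≤ k → Geodesic X u

/-- A language `L` of words over `X` is `k`-locally excluding: membership (among words
over `X`) is equivalent to avoiding a fixed finite set of forbidden subwords of length
at most `k`. -/
def LocallyExcluding {G : Type*} [Group G] (X : Set G) (k : ℕ) (L : Set (List G)) : Prop :=
  ∃ F : Set (List G), F.Finite ∧ (∀ f ∈ F, f.length ≤ k) ∧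
    ∀ w : List G, (∀ x ∈ w, x ∈ X) → (w ∈ L ↔ ∀ f ∈ F, ¬ f <:+: w)

/-- One step of rewriting with the set of rules `R` (replace a subword `p.1` by `p.2`). -/
def Rewrite {G : Type*} (R : Set (List G × List G)) (w w' : List G) : Prop :=
  ∃ p ∈ R, ∃ l r : List G, w = l ++ p.1 ++ r ∧ w' = l ++ p.2 ++ r

/-!
Appending a letter to a geodesic word and shortening at most twice across a forbidden subword
of length at most `k` gives a geodesic again. So along any word `w` there are geodesics `τ u` for
the prefixes `u` of `w`, each obtained from the previous one by replacing a suffix of length at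
most `2k + 1`. If `τ w` has length `L`, split `w` at a step where the first half of `τ w` becomes
a prefix of `τ u`: both pieces then represent elements of length at most `⌈L/2⌉ + 2k + 1`.
Hence every word representing an element of the ball of radius `4k + 3` splits into two nonempty
words representing elements of that ball, and the grammar with one nonterminal for each element
`c` of the ball and rules `c → c₁ c₂` (`c = c₁ c₂`), `x → x` and `1 → ε` generates the word
problem.
-/

namespace List

variable {α : Type*}

lemma IsInfix.exists_of_append_of_not_infix {f a b : List α} (h : f <:+: a ++ b)
    (ha : ¬ f <:+: a) : ∃ a₁ f₁, a = a₁ ++ f₁ ∧ f₁.length < f.length ∧ f <:+: f₁ ++ b := by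
  obtain ⟨s, t, hst⟩ := h
  rcases List.append_eq_append_iff.1 hst with ⟨a', rfl, -⟩ | ⟨b', hsf, rfl⟩
  · exact absurd (infix_append s f a') ha
  rcases List.append_eq_append_iff.1 hsf with ⟨f₁, rfl, rfl⟩ | ⟨s', rfl, rfl⟩
  · refine ⟨s, f₁, rfl, ?_, ⟨[], t, by simp⟩⟩
    rcases b'.eq_nil_or_concat with rfl | ⟨b'', y, rfl⟩
    · exact (ha (by simpa using infix_append_right)).elim
    · simp
  · refine ⟨a, [], by simp, List.length_pos_iff.2 fun hf => ha (hf ▸ nil_infix), ?_⟩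
    exact ⟨s', t, by simp⟩

end List

def ReplacesSuffix {α : Type*} (D : ℕ) (v v' : List α) : Prop :=
  ∃ p r, p <+: v ∧ v.length ≤ p.length + D ∧ r.length ≤ D ∧ v' = p ++ r

lemma ReplacesSuffix.exists_eq_append_of_not_prefix {α : Type*} {D : ℕ} {v v' q : List α}
    (h : ReplacesSuffix D v v') (hq' : q <+: v') (hq : ¬ q <+: v) :
    v.length < q.length + D ∧ ∃ s, v' = q ++ s ∧ s.length ≤ D := by
  obtain ⟨p, r, hp, hvp, hr, rfl⟩ := h
  have hpq : p.length < q.length := by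
    by_contra! hle
    exact hq ((List.prefix_of_prefix_length_le hq' (List.prefix_append p r) hle).trans hp)
  obtain ⟨r', rfl⟩ := List.prefix_of_prefix_length_le (List.prefix_append p r) hq' hpq.le
  obtain ⟨s, rfl⟩ := (List.prefix_append_right_inj p).1 hq'
  refine ⟨by omega, s, by simp, ?_⟩
  simp only [List.length_append] at hr
  omega

lemma exists_step_gaining_prefix {T α : Type*} (τ : List T → List α) (hτ : τ [] = [])
    {q : List α} (hq : q ≠ []) {w : List T} (hw : q <+: τ w) :
    ∃ u x w', w = u ++ x :: w' ∧ ¬ q <+: τ u ∧ q <+: τ (u ++ [x]) := by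
  induction w using List.reverseRecOn with
  | nil => exact absurd (List.prefix_nil.1 (hτ ▸ hw)) hq
  | append_singleton w₀ y ih =>
    by_cases hw₀ : q <+: τ w₀
    · obtain ⟨u, x, w', rfl, hu, hux⟩ := ih hw₀
      exact ⟨u, x, w' ++ [y], by simp, hu, hux⟩
    · exact ⟨w₀, y, [], rfl, hw₀, hw⟩

def SplitsWithin {T M : Type*} [Monoid M] (φ : T → M) (B : Set M) : Prop :=
  ∀ w : List T, 2 ≤ w.length → (w.map φ).prod ∈ B →
    ∃ u v, u ≠ [] ∧ v ≠ [] ∧ u ++ v = w ∧ (u.map φ).prod ∈ B ∧ (v.map φ).prod ∈ B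

section SplittingGrammar

variable {T M : Type*} [Monoid M]

lemma ContextFreeGrammar.Derives.prod_map_eq {g : ContextFreeGrammar T}
    (val : Symbol T g.NT → M)
    (hval : ∀ r ∈ g.rules, val (.nonterminal r.input) = (r.output.map val).prod)
    {u v : List (Symbol T g.NT)} (h : g.Derives u v) :
    (u.map val).prod = (v.map val).prod := by
  induction h with
  | refl => rfl
  | tail _ hstep ih =>
    obtain ⟨r, hr, hrw⟩ := hstep
    obtain ⟨p, q, rfl, rfl⟩ := hrw.exists_parts
    simp only [List.map_append, List.prod_append, List.map_cons, List.map_nil,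
      List.prod_cons, List.prod_nil, mul_one] at ih ⊢
    rw [ih, hval r hr]

variable (φ : T → M) {B : Set M} {N : Type} (e : B ≃ N)

def symbolValue : Symbol T N → M
  | .terminal a => φ a
  | .nonterminal i => e.symm i

variable [Fintype T] [Fintype B]

open Classical in
noncomputable def splittingRules : Finset (ContextFreeRule T N) :=
  ((Finset.univ.filter fun c : B × B × B => (c.1 : M) = c.2.1 * c.2.2).image fun c =>
      ⟨e c.1, [.nonterminal (e c.2.1), .nonterminal (e c.2.2)]⟩) ∪
    ((Finset.univ.filter fun c : B × T => (c.1 : M) = φ c.2).image fun c =>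
      ⟨e c.1, [.terminal c.2]⟩) ∪
    ((Finset.univ.filter fun c : B => (c : M) = 1).image fun c => ⟨e c, []⟩)

noncomputable def splittingGrammar (b : B) : ContextFreeGrammar T :=
  ⟨N, e b, splittingRules φ e⟩

variable {φ e}

lemma mem_splittingRules {r : ContextFreeRule T N} :
    r ∈ splittingRules φ e ↔
      (∃ c c₁ c₂ : B, (c : M) = c₁ * c₂ ∧ ⟨e c, [.nonterminal (e c₁), .nonterminal (e c₂)]⟩ = r) ∨
      (∃ (c : B) (a : T), (c : M) = φ a ∧ ⟨e c, [.terminal a]⟩ = r) ∨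
      ∃ c : B, (c : M) = 1 ∧ ⟨e c, []⟩ = r := by
  simp only [splittingRules, Finset.mem_union, Finset.mem_image, Finset.mem_filter,
    Finset.mem_univ, true_and, Prod.exists, or_assoc]

lemma symbolValue_nonterminal_input {r : ContextFreeRule T N} (hr : r ∈ splittingRules φ e) :
    symbolValue φ e (.nonterminal r.input) = (r.output.map (symbolValue φ e)).prod := by
  rcases mem_splittingRules.1 hr with ⟨c, c₁, c₂, hc, rfl⟩ | ⟨c, a, hc, rfl⟩ | ⟨c, hc, rfl⟩ <;>
    simp [symbolValue, hc]

lemma splittingGrammar_derives_of_prod_eq (hsplit : SplitsWithin φ B) (b : B) (w : List T)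
    (c : B) (hw : (w.map φ).prod = c) :
    (splittingGrammar φ e b).Derives [.nonterminal (e c)] (w.map .terminal) := by
  induction hn : w.length using Nat.strong_induction_on generalizing w c with
  | _ n ih =>
  have rule_derives : ∀ r ∈ splittingRules φ e,
      (splittingGrammar φ e b).Derives [.nonterminal r.input] r.output := fun r hr =>
    ContextFreeGrammar.Produces.single ⟨r, hr, ContextFreeRule.Rewrites.input_output⟩
  match w, hw with
  | [], hw => exact rule_derives _ (mem_splittingRules.2 (.inr (.inr ⟨c, hw.symm, rfl⟩)))
  | [a], hw =>
    exact rule_derives _ (mem_splittingRules.2 (.inr (.inl ⟨c, a, by simpa using hw.symm, rfl⟩)))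
  | a :: a' :: w', hw =>
    obtain ⟨u, v, hu, hv, huv, huB, hvB⟩ := hsplit (a :: a' :: w') (by simp) (hw ▸ c.2)
    have hlen : u.length + v.length = n := by rw [← hn, ← huv, List.length_append]
    have du := ih u.length (by simp [← hlen, List.length_pos_iff.2 hv]) u ⟨_, huB⟩ rfl rfl
    have dv := ih v.length (by simp [← hlen, List.length_pos_iff.2 hu]) v ⟨_, hvB⟩ rfl rfl
    have hrule := rule_derives _ (mem_splittingRules.2 (.inl ⟨c, ⟨_, huB⟩, ⟨_, hvB⟩,
      by rw [← hw, ← huv, List.map_append, List.prod_append], rfl⟩))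
    rw [← huv, List.map_append]
    exact hrule.trans ((dv.append_left _).trans (du.append_right _))

end SplittingGrammar

theorem isContextFree_setOf_prod_eq {T M : Type*} [Finite T] [Monoid M] {φ : T → M}
    {B : Set M} (hB : B.Finite) (hsplit : SplitsWithin φ B) {b : M} (hb : b ∈ B) :
    Language.IsContextFree {w : List T | (w.map φ).prod = b} := by
  have := Fintype.ofFinite T
  have := hB.fintype
  let e := Fintype.equivFin B
  refine ⟨splittingGrammar φ e ⟨b, hb⟩, Set.ext fun w => ⟨fun hw => ?_,
    splittingGrammar_derives_of_prod_eq hsplit ⟨b, hb⟩ w ⟨b, hb⟩⟩⟩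
  have := hw.prod_map_eq (symbolValue φ e) fun r hr => symbolValue_nonterminal_input hr
  simpa [symbolValue, splittingGrammar, Function.comp_def] using this.symm

section Geodesics

variable {G : Type*} [Group G] {X : Set G}

lemma lG_le_length {w : List G} (hw : ∀ x ∈ w, x ∈ X) : lG X w.prod ≤ w.length :=
  Nat.sInf_le ⟨w, hw, rfl, rfl⟩

lemma exists_geodesic_prod_eq {w : List G} (hw : ∀ x ∈ w, x ∈ X) :
    ∃ v, Geodesic X v ∧ v.prod = w.prod := by
  obtain ⟨v, hvX, hvp, hvl⟩ := Nat.sInf_mem (⟨_, w, hw, rfl, rfl⟩ :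
    {n | ∃ v : List G, (∀ x ∈ v, x ∈ X) ∧ v.prod = w.prod ∧ v.length = n}.Nonempty)
  exact ⟨v, ⟨hvX, by rw [hvl, hvp]; rfl⟩, hvp⟩

lemma geodesic_of_length_le {w : List G} (hw : ∀ x ∈ w, x ∈ X) (h : w.length ≤ lG X w.prod) :
    Geodesic X w :=
  ⟨hw, le_antisymm h (lG_le_length hw)⟩

lemma Geodesic.length_le {v w : List G} (hv : Geodesic X v) (hw : ∀ x ∈ w, x ∈ X)
    (h : w.prod = v.prod) : v.length ≤ w.length :=
  hv.2 ▸ h ▸ lG_le_length hw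

lemma exists_geodesic_length_lt {w : List G} (hw : ∀ x ∈ w, x ∈ X) (hng : ¬ Geodesic X w) :
    ∃ v, Geodesic X v ∧ v.prod = w.prod ∧ v.length < w.length := by
  obtain ⟨v, hv, hvp⟩ := exists_geodesic_prod_eq hw
  refine ⟨v, hv, hvp, lt_of_le_of_ne (hv.length_le hw hvp.symm) fun h => hng ⟨hw, ?_⟩⟩
  rw [← h, hv.2, hvp]

lemma Geodesic.infix {w t : List G} (hw : Geodesic X w) (ht : t <:+: w) : Geodesic X t := by
  obtain ⟨a, b, rfl⟩ := ht
  have hX := hw.1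
  simp only [List.forall_mem_append] at hX
  refine geodesic_of_length_le hX.1.2 ?_
  obtain ⟨t', ht', ht'p⟩ := exists_geodesic_prod_eq hX.1.2
  have := hw.length_le (w := a ++ t' ++ b)
    (by simp only [List.forall_mem_append]; exact ⟨⟨hX.1.1, ht'.1⟩, hX.2⟩) (by simp [ht'p])
  simp only [List.length_append] at this
  rw [← ht'p, ← ht'.2]
  omega

lemma LocallyExcluding.exists_infix_not_mem {k : ℕ} {L : Set (List G)}
    (hle : LocallyExcluding X k L) {w : List G} (hw : ∀ x ∈ w, x ∈ X) (hL : w ∉ L) :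
    ∃ f, f <:+: w ∧ f.length ≤ k ∧ f ∉ L := by
  obtain ⟨F, -, hFk, hF⟩ := hle
  obtain ⟨f, hfF, hfw⟩ : ∃ f ∈ F, f <:+: w := by
    by_contra! h
    exact hL ((hF w hw).2 h)
  exact ⟨f, hfw, hFk f hfF, fun hf => (hF f fun x hx => hw x (hfw.subset hx)).1 hf f hfF
    (List.infix_refl f)⟩

variable {k : ℕ}

lemma Geodesic.exists_shortcut_append (hle : LocallyExcluding X k {w | Geodesic X w})
    {a b : List G} (ha : Geodesic X a)
    (hb : ∀ x ∈ b, x ∈ X) (hab : ¬ Geodesic X (a ++ b)) :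
    ∃ a₁ r, a₁ <+: a ∧ a.length < a₁.length + k ∧ Geodesic X r ∧
      (a₁ ++ r).prod = (a ++ b).prod ∧ (a₁ ++ r).length < (a ++ b).length := by
  have habX : ∀ x ∈ a ++ b, x ∈ X := by simp_all [or_imp, ha.1]
  obtain ⟨f, hf, hfk, hfg⟩ := hle.exists_infix_not_mem habX hab
  obtain ⟨a₁, f₁, rfl, hf₁, hff⟩ := hf.exists_of_append_of_not_infix fun h => hfg (ha.infix h)
  obtain ⟨r, hr, hrp, hrl⟩ := exists_geodesic_length_lt (w := f₁ ++ b)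
    (fun x hx => habX x (by simp_all)) fun h => hfg (h.infix hff)
  refine ⟨a₁, r, List.prefix_append _ _, by simp; omega, hr, by simp [hrp], ?_⟩
  simp only [List.length_append] at hrl ⊢
  omega

lemma Geodesic.length_le_lG_mul_add_one {u : List G} (hu : Geodesic X u) {x : G} (hx : x ∈ X)
    (hx' : x⁻¹ ∈ X) : u.length ≤ lG X (u.prod * x) + 1 := by
  obtain ⟨v, hv, hvp⟩ := exists_geodesic_prod_eq (X := X) (w := u ++ [x])
    (List.forall_mem_append.2 ⟨hu.1, by simpa using hx⟩)
  have := hu.length_le (w := v ++ [x⁻¹]) (List.forall_mem_append.2 ⟨hv.1, by simpa using hx'⟩)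
    (by simp [hvp])
  simp only [List.length_append, List.length_singleton] at this
  rwa [hv.2, hvp, List.prod_append, List.prod_singleton] at this

/-- Each shortening by `exists_shortcut_append` loses a letter, and
`u.length ≤ lG X (u.prod * x) + 1`, so at most two are needed. -/
lemma Geodesic.exists_replacesSuffix_mul (hle : LocallyExcluding X k {w | Geodesic X w})
    (hsym : ∀ x ∈ X, x⁻¹ ∈ X) {u : List G}
    (hu : Geodesic X u) {x : G} (hx : x ∈ X) :
    ∃ v, ReplacesSuffix (2 * k + 1) u v ∧ Geodesic X v ∧ v.prod = u.prod * x := by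
  have hxX : ∀ y ∈ [x], y ∈ X := by simpa using hx
  by_cases h₀ : Geodesic X (u ++ [x])
  · exact ⟨u ++ [x], ⟨u, [x], List.prefix_rfl, by omega, by simp, rfl⟩, h₀, by simp⟩
  obtain ⟨a₁, r₁, ha₁, hk₁, hr₁, hp₁, hl₁⟩ := hu.exists_shortcut_append hle hxX h₀
  simp only [List.length_append, List.length_singleton] at hl₁
  by_cases h₁ : Geodesic X (a₁ ++ r₁)
  · refine ⟨a₁ ++ r₁, ⟨a₁, r₁, ha₁, by omega, by simp at hl₁; omega, rfl⟩, h₁, by simp_all⟩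
  obtain ⟨a₂, r₂, ha₂, hk₂, hr₂, hp₂, hl₂⟩ :=
    (hu.infix ha₁.isInfix).exists_shortcut_append hle hr₁.1 h₁
  have hlow := hu.length_le_lG_mul_add_one hx (hsym x hx)
  simp only [List.length_append] at hl₁ hl₂
  have ha₂₁ := ha₂.length_le
  refine ⟨a₂ ++ r₂, ⟨a₂, r₂, ha₂.trans ha₁, by omega, by omega, rfl⟩,
    geodesic_of_length_le ?_ ?_, by rw [hp₂, hp₁]; simp⟩
  · exact List.forall_mem_append.2 ⟨(hu.infix (ha₂.trans ha₁).isInfix).1, hr₂.1⟩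
  · rw [hp₂, hp₁]
    simp only [List.length_append, List.prod_append, List.prod_singleton]
    omega

lemma exists_geodesic_trajectory (hle : LocallyExcluding X k {w | Geodesic X w})
    (hsym : ∀ x ∈ X, x⁻¹ ∈ X) :
    ∃ τ : List X → List G, τ [] = [] ∧
      (∀ u, Geodesic X (τ u) ∧ (τ u).prod = (u.map (↑)).prod) ∧
      ∀ u x, ReplacesSuffix (2 * k + 1) (τ u) (τ (u ++ [x])) := by
  have hstep (v : List G) (x : X) : ∃ v', Geodesic X v →
      ReplacesSuffix (2 * k + 1) v v' ∧ Geodesic X v' ∧ v'.prod = v.prod * x := by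
    by_cases hv : Geodesic X v
    · obtain ⟨v', hv'⟩ := hv.exists_replacesSuffix_mul hle hsym x.2
      exact ⟨v', fun _ => hv'⟩
    · exact ⟨[], fun h => absurd h hv⟩
  choose next hnext using hstep
  have hgeod (u : List X) : Geodesic X (u.foldl next []) ∧
      (u.foldl next []).prod = (u.map (↑)).prod := by
    induction u using List.reverseRecOn with
    | nil => exact ⟨geodesic_of_length_le (by simp) (by simp), rfl⟩
    | append_singleton u x ih =>
      obtain ⟨-, hg, hp⟩ := hnext _ x ih.1
      simp only [List.foldl_append, List.foldl_cons, List.foldl_nil, List.map_append,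
        List.prod_append, List.map_cons, List.map_nil, List.prod_cons, List.prod_nil, mul_one]
      exact ⟨hg, by rw [hp, ih.2]⟩
  refine ⟨fun u => u.foldl next [], rfl, hgeod, fun u x => ?_⟩
  simpa using (hnext _ x (hgeod u).1).1

end Geodesics

section WordBall

variable {G : Type*} [Group G] {X : Set G}

def wordBall (X : Set G) (n : ℕ) : Set G :=
  {g | ∃ w : List G, (∀ x ∈ w, x ∈ X) ∧ w.prod = g ∧ w.length ≤ n}

lemma wordBall_finite (hX : X.Finite) (n : ℕ) : (wordBall X n).Finite := by
  have := hX.to_subtype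
  refine ((List.finite_length_le X n).image fun l => (l.map (↑)).prod).subset ?_
  rintro g ⟨w, hw, rfl, hwn⟩
  lift w to List X using hw
  exact ⟨w, by simpa using hwn, rfl⟩

lemma inv_mul_mem_wordBall (hsym : ∀ x ∈ X, x⁻¹ ∈ X) {s t : List G} (hs : ∀ x ∈ s, x ∈ X)
    (ht : ∀ x ∈ t, x ∈ X) {n : ℕ} (hn : s.length + t.length ≤ n) :
    s.prod⁻¹ * t.prod ∈ wordBall X n := by
  refine ⟨(s.map (·⁻¹)).reverse ++ t, List.forall_mem_append.2 ⟨?_, ht⟩, ?_, by simpa using hn⟩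
  · simp only [List.mem_reverse, List.mem_map]
    rintro _ ⟨a, ha, rfl⟩
    exact hsym a (hs a ha)
  · rw [List.prod_append, ← List.prod_inv_reverse]

lemma eq_inv_mul_of_prod_append {q s t : List G} {g h : G} (hs : (q ++ s).prod = g)
    (ht : (q ++ t).prod = g * h) : h = s.prod⁻¹ * t.prod := by
  rw [List.prod_append] at hs ht
  rw [← hs, mul_assoc] at ht
  rw [mul_left_cancel ht]
  group

theorem splitsWithin_wordBall {k : ℕ} (hle : LocallyExcluding X k {w | Geodesic X w})
    (hsym : ∀ x ∈ X, x⁻¹ ∈ X) : SplitsWithin (fun a : X => (a : G)) (wordBall X (4 * k + 3)) := by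
  obtain ⟨τ, hτ₀, hτ, hstep⟩ := exists_geodesic_trajectory hle hsym
  rintro w hw₂ ⟨y, hyX, hyp, hyl⟩
  obtain ⟨hvg, hvp⟩ := hτ w
  have hL := (hvg.length_le hyX (hyp.trans hvp.symm)).trans hyl
  set v := τ w
  set m := v.length / 2
  by_cases hm : m = 0
  · obtain ⟨a, w₀, rfl⟩ := List.exists_cons_of_length_pos (by omega : 0 < w.length)
    refine ⟨[a], w₀, by simp, List.ne_nil_of_length_pos (by simp at hw₂; omega), rfl,
      ⟨[a], by simp, by simp, by simp⟩, ?_⟩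
    convert inv_mul_mem_wordBall hsym (s := [(a : G)]) (by simp) hvg.1 (n := 4 * k + 3)
      (by simp; omega) using 1
    simp [hvp]
  have hq : v.take m ≠ [] := List.ne_nil_of_length_pos (by simp; omega)
  obtain ⟨u, x, w', rfl, hnq, hq'⟩ := exists_step_gaining_prefix τ hτ₀ hq (List.take_prefix m v)
  obtain ⟨hlt, s, hs, hsl⟩ := (hstep u x).exists_eq_append_of_not_prefix hq' hnq
  have hqm : (v.take m).length = m := by simp; omega
  by_cases hw' : w' = []
  · subst hw'
    refine ⟨u, [x], List.ne_nil_of_length_pos (by simp at hw₂; omega), by simp, rfl,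
      ⟨τ u, (hτ u).1.1, (hτ u).2, by omega⟩, ⟨[x], by simp, by simp, by simp⟩⟩
  obtain ⟨hux, hux'⟩ := hτ (u ++ [x])
  rw [hs] at hux hux'
  have hsX := (List.forall_mem_append.1 hux.1).2
  have hw'v : (w'.map (↑)).prod = s.prod⁻¹ * (v.drop m).prod :=
    eq_inv_mul_of_prod_append hux' (by rw [List.take_append_drop, hvp]; simp [mul_assoc])
  refine ⟨u ++ [x], w', by simp, hw', by simp, ⟨_, hux.1, hux', by simp; omega⟩, ?_⟩
  rw [hw'v]
  exact inv_mul_mem_wordBall hsym hsX (hvg.infix (List.drop_suffix m v).isInfix).1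
    (by simp; omega)

end WordBall

theorem wordProblem_isContextFree_general {G : Type*} [Group G] (X : Set G)
    (hfin : X.Finite) (hsym : ∀ x ∈ X, x⁻¹ ∈ X)
    (k : ℕ)
    (hle : LocallyExcluding X k {w : List G | Geodesic X w}) :
    Language.IsContextFree {w : List X | (w.map (fun a => (a : G))).prod = 1} := by
  have := hfin.to_subtype
  have h := isContextFree_setOf_prod_eq (wordBall_finite hfin _) (splitsWithin_wordBall hle hsym)
    (⟨[], by simp, rfl, by simp⟩ : (1 : G) ∈ wordBall X (4 * k + 3))
  -- the goal's `w.map (fun a => (a : G))` elaborates as a map over `w` coerced to `List G`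
  simpa using h

/-- If the geodesics of `G` over a finite symmetric generating set `X` are `k`-locally
excluding, then the word problem of `G` over `X` (as a language over the alphabet `X`)
is accepted by a pushdown automaton; in particular it is context-free. -/
theorem wordProblem_isContextFree {G : Type*} [Group G] (X : Set G)
    (hfin : X.Finite) (hsym : ∀ x ∈ X, x⁻¹ ∈ X) (hgen : Subgroup.closure X = ⊤)
    (k : ℕ) (hk : 0 < k)
    (hle : LocallyExcluding X k {w : List G | Geodesic X w}) :
    Language.IsContextFree {w : List X | (w.map (fun a => (a : G))).prod = 1} :=
  wordProblem_isContextFree_general X hfin hsym k hle
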